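/- arXiv:2512.24704 — 5 statements merged into one kernel-verified Lean document; each statement's English description precedes it below -/
import Mathlib

section
/- Let σ ∈ (1,2), and let ν be a Borel measure on ℝ^d satisfying ν(B_r^c) ≤ Λ r^{-σ} for all r > 0 with Λ ≥ 1. Define m(ξ) = ∫_{ℝ^d} (e^{i ξ·y} − 1 − i ξ·y) dν(y). Then there is a constant N = N(σ, Λ) such that |m(ξ)| ≤ N |ξ|^σ for all ξ ∈ ℝ^d. -/
/-!
Pointwise, `|e^{ix} - 1 - ix| ≤ 2 min(|x|, x²)`, so with `c = |ξ|` the integrand is dominated by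
`2 φ(c|y|)` where `φ(u) = min(u, u²)`. By the layer-cake formula, `∫ φ(c|y|) dν` is the integral over
`t > 0` of `ν{|y| > max(t, √t) / c} ≤ Λ c^σ max(t, √t)^{-σ}`, and `max(t, √t)^{-σ}` is `t^{-σ/2}` on
`(0, 1]` and `t^{-σ}` on `(1, ∞)`: integrable exactly because `1 < σ < 2`.
-/

open MeasureTheory Set
open scoped InnerProductSpace

lemma norm_cexp_I_mul_sub_one_sub_le (x : ℝ) :
    ‖Complex.exp (Complex.I * x) - 1 - Complex.I * x‖ ≤ 2 * min |x| (x ^ 2) := by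
  have hIx : ‖Complex.I * (x : ℂ)‖ = |x| := by simp
  rcases le_total |x| 1 with hx | hx
  · have hsq : x ^ 2 ≤ |x| := by nlinarith [sq_abs x, abs_nonneg x]
    rw [min_eq_right hsq]
    calc _ ≤ ‖Complex.I * (x : ℂ)‖ ^ 2 := Complex.norm_exp_sub_one_sub_id_le (hIx ▸ hx)
      _ = x ^ 2 := by rw [hIx, sq_abs]
      _ ≤ 2 * x ^ 2 := by nlinarith [sq_nonneg x]
  · have hsq : |x| ≤ x ^ 2 := by nlinarith [sq_abs x]
    rw [min_eq_left hsq]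
    calc _ ≤ ‖Complex.exp (Complex.I * x) - 1‖ + ‖Complex.I * (x : ℂ)‖ := norm_sub_le _ _
      _ ≤ |x| + |x| := by rw [hIx]; gcongr; exact Real.norm_exp_I_mul_ofReal_sub_one_le
      _ = 2 * |x| := by ring

lemma norm_cexp_I_mul_inner_sub_one_sub_le {E : Type*} [NormedAddCommGroup E]
    [InnerProductSpace ℝ E] (ξ y : E) :
    ‖Complex.exp (Complex.I * ⟪ξ, y⟫_ℝ) - 1 - Complex.I * ⟪ξ, y⟫_ℝ‖ ≤
      2 * min (‖ξ‖ * ‖y‖) ((‖ξ‖ * ‖y‖) ^ 2) := by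
  have h := abs_real_inner_le_norm ξ y
  refine (norm_cexp_I_mul_sub_one_sub_le _).trans ?_
  gcongr 2 * ?_
  exact min_le_min h (by rw [← sq_abs]; gcongr)

lemma lt_min_self_sq_iff {t u : ℝ} (ht : 0 ≤ t) (hu : 0 ≤ u) :
    t < min u (u ^ 2) ↔ max t √t < u := by
  rw [lt_min_iff, max_lt_iff, Real.sqrt_lt ht hu]

lemma integrableOn_max_self_sqrt_rpow_neg {σ : ℝ} (hσ : σ ∈ Ioo 1 2) :
    IntegrableOn (fun t : ℝ => max t √t ^ (-σ)) (Ioi 0) := by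
  rw [← Ioc_union_Ioi_eq_Ioi zero_le_one]
  refine IntegrableOn.union ?_ ?_
  · have h : IntegrableOn (fun t : ℝ => t ^ (-(σ / 2))) (Ioc 0 1) :=
      (intervalIntegrable_iff_integrableOn_Ioc_of_le zero_le_one).1
        (intervalIntegral.intervalIntegrable_rpow' (by linarith [hσ.2]))
    refine h.congr_fun (fun t ht => ?_) measurableSet_Ioc
    rw [max_eq_right (Real.le_sqrt_self_iff.2 ht.2), Real.sqrt_eq_rpow,
      ← Real.rpow_mul ht.1.le]
    ring_nf
  · refine (integrableOn_Ioi_rpow_of_lt (a := -σ) (by linarith [hσ.1]) zero_lt_one).congr_fun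
      (fun t ht => ?_) measurableSet_Ioi
    rw [max_eq_left (Real.sqrt_le_self_iff.2 (Or.inr (le_of_lt ht)))]

section TailBound

variable {E : Type*} [NormedAddCommGroup E] [MeasurableSpace E] [OpensMeasurableSpace E]
  {ν : Measure E} {σ Λ : ℝ}

lemma lintegral_min_mul_norm_le (hΛ : 0 ≤ Λ)
    (hν : ∀ r : ℝ, 0 < r → ν {y | r < ‖y‖} ≤ ENNReal.ofReal (Λ * r ^ (-σ))) {c : ℝ}
    (hc : 0 ≤ c) :
    ∫⁻ y, ENNReal.ofReal (min (c * ‖y‖) ((c * ‖y‖) ^ 2)) ∂ν ≤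
      ENNReal.ofReal (Λ * c ^ σ) * ∫⁻ t in Ioi 0, ENNReal.ofReal (max t √t ^ (-σ)) := by
  rcases hc.eq_or_lt with rfl | hc
  · simp
  have hmeas : Measurable fun y : E => min (c * ‖y‖) ((c * ‖y‖) ^ 2) := by fun_prop
  rw [lintegral_eq_lintegral_meas_lt ν (ae_of_all _ fun y => by positivity) hmeas.aemeasurable,
    ← lintegral_const_mul' _ _ ENNReal.ofReal_ne_top]
  refine setLIntegral_mono' measurableSet_Ioi fun t (ht : 0 < t) => ?_
  have hm : 0 < max t √t := lt_max_of_lt_left ht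
  have hlevel : {y : E | t < min (c * ‖y‖) ((c * ‖y‖) ^ 2)} = {y | max t √t / c < ‖y‖} := by
    ext y
    simp only [mem_ofPred_eq, div_lt_iff₀' hc]
    exact lt_min_self_sq_iff ht.le (by positivity)
  rw [hlevel, ← ENNReal.ofReal_mul (by positivity)]
  refine (hν _ (div_pos hm hc)).trans_eq (congrArg _ ?_)
  rw [Real.div_rpow hm.le hc.le, Real.rpow_neg hc.le, div_inv_eq_mul]
  ring

lemma lintegral_norm_cexp_I_mul_inner_sub_one_sub_le [InnerProductSpace ℝ E] (hΛ : 0 ≤ Λ)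
    (hν : ∀ r : ℝ, 0 < r → ν {y | r < ‖y‖} ≤ ENNReal.ofReal (Λ * r ^ (-σ))) (ξ : E) :
    ∫⁻ y, ENNReal.ofReal ‖Complex.exp (Complex.I * ⟪ξ, y⟫_ℝ) - 1 - Complex.I * ⟪ξ, y⟫_ℝ‖ ∂ν ≤
      ENNReal.ofReal (2 * Λ * ‖ξ‖ ^ σ) * ∫⁻ t in Ioi 0, ENNReal.ofReal (max t √t ^ (-σ)) := calc
  _ ≤ ∫⁻ y, ENNReal.ofReal 2 * ENNReal.ofReal (min (‖ξ‖ * ‖y‖) ((‖ξ‖ * ‖y‖) ^ 2)) ∂ν :=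
      lintegral_mono fun y => by
        rw [← ENNReal.ofReal_mul zero_le_two]
        exact ENNReal.ofReal_le_ofReal (norm_cexp_I_mul_inner_sub_one_sub_le ξ y)
  _ = ENNReal.ofReal 2 * ∫⁻ y, ENNReal.ofReal (min (‖ξ‖ * ‖y‖) ((‖ξ‖ * ‖y‖) ^ 2)) ∂ν :=
      lintegral_const_mul' _ _ ENNReal.ofReal_ne_top
  _ ≤ ENNReal.ofReal 2 * (ENNReal.ofReal (Λ * ‖ξ‖ ^ σ) *
        ∫⁻ t in Ioi 0, ENNReal.ofReal (max t √t ^ (-σ))) := by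
      gcongr
      exact lintegral_min_mul_norm_le hΛ hν (norm_nonneg ξ)
  _ = _ := by
      rw [← mul_assoc, ← ENNReal.ofReal_mul zero_le_two, mul_assoc]

end TailBound

theorem stmt_3_general (d : ℕ) (ν : Measure (EuclideanSpace ℝ (Fin d)))
    (σ Λ : ℝ) (hσ : σ ∈ Set.Ioo (1:ℝ) 2) (hΛ : 1 ≤ Λ)
    (hν : ∀ r : ℝ, 0 < r → ν {y | r < ‖y‖} ≤ ENNReal.ofReal (Λ * r ^ (-σ))) :
    ∃ N : ℝ, 0 < N ∧ ∀ ξ : EuclideanSpace ℝ (Fin d),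
      ‖∫ y, (Complex.exp (Complex.I * (⟪ξ, y⟫_ℝ : ℂ)) - 1
          - Complex.I * (⟪ξ, y⟫_ℝ : ℂ)) ∂ν‖ ≤ N * ‖ξ‖ ^ σ := by
  set K := ∫ t in Ioi (0 : ℝ), max t √t ^ (-σ)
  have hΛ0 : 0 ≤ Λ := by linarith
  have hK : 0 ≤ K := setIntegral_nonneg measurableSet_Ioi fun t _ => by positivity
  have hK_eq : ∫⁻ t in Ioi 0, ENNReal.ofReal (max t √t ^ (-σ)) = ENNReal.ofReal K :=
    (ofReal_integral_eq_lintegral_ofReal (integrableOn_max_self_sqrt_rpow_neg hσ)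
      (ae_of_all _ fun t => by positivity)).symm
  have hN : 0 ≤ 2 * Λ * K := by positivity
  refine ⟨2 * Λ * K + 1, by linarith, fun ξ => ?_⟩
  have hbound := lintegral_norm_cexp_I_mul_inner_sub_one_sub_le hΛ0 hν ξ
  rw [hK_eq, ← ENNReal.ofReal_mul (by positivity)] at hbound
  refine (norm_integral_le_lintegral_norm _).trans
    (ENNReal.toReal_le_of_le_ofReal (by positivity) (hbound.trans (ENNReal.ofReal_le_ofReal ?_)))
  rw [mul_right_comm]
  gcongr
  linarith

/-- Symbol bound for a Lévy measure of order `σ ∈ (1,2)`: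
`|∫ (e^{i ξ·y} - 1 - i ξ·y) ν(dy)| ≤ N |ξ|^σ`. -/
theorem stmt_3 (d : ℕ) (ν : Measure (EuclideanSpace ℝ (Fin d)))
    (σ Λ : ℝ) (hσ : σ ∈ Set.Ioo (1:ℝ) 2) (hΛ : 1 ≤ Λ)
    (h0 : ν {0} = 0)
    (hν : ∀ r : ℝ, 0 < r → ν {y | r < ‖y‖} ≤ ENNReal.ofReal (Λ * r ^ (-σ))) :
    ∃ N : ℝ, 0 < N ∧ ∀ ξ : EuclideanSpace ℝ (Fin d),
      ‖∫ y, (Complex.exp (Complex.I * (⟪ξ, y⟫_ℝ : ℂ)) - 1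
          - Complex.I * (⟪ξ, y⟫_ℝ : ℂ)) ∂ν‖ ≤ N * ‖ξ‖ ^ σ :=
  stmt_3_general d ν σ Λ hσ hΛ hν
end

section
/- Let σ ∈ (0,2), Λ ≥ 1, and let ν be a Borel measure on ℝ^d with ν(B_r^c) ≤ Λ r^{-σ} for all r > 0. Define μ(dy) = ν(dy) + |y|^{-d-σ} dy. Then for every r > 0 and every ξ ∈ ℝ^d, (1/μ(B_r^c)) · |∫_{|y| > r} (1 − e^{i ξ·y}) dμ(y)| ≤ N r^{σ/2} |ξ|^{σ/2}, where N = N(d, σ, Λ). -/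
open MeasureTheory Metric Set
open scoped InnerProductSpace

/-!
The stable part of `μ` has tail exactly `c r^(-σ)` with `c = d |B₁| / σ` (polar coordinates), so
`μ(B_r^c)` is comparable to `r^(-σ)` from both sides. Summing over the dyadic shells
`r 2ⁿ < |y| ≤ r 2ⁿ⁺¹`, a tail bound `C t^(-σ)` gives `∫_{|y|>r} |y|^(σ/2) dμ ≲ r^(-σ/2)`.
Since `|1 - e^{iθ}| ≤ min(|θ|, 2) ≤ 2 |θ|^(σ/2)`, the integral is at most `2 |ξ|^(σ/2)` times
this moment, i.e. `≲ |ξ|^(σ/2) r^(-σ/2) ≲ r^(σ/2) |ξ|^(σ/2) μ(B_r^c)`.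
-/

theorem exists_two_pow_lt_le {a x : ℝ} (ha : 0 < a) (hx : a < x) :
    ∃ n : ℕ, a * 2 ^ n < x ∧ x ≤ a * 2 ^ (n + 1) := by
  classical
  have h : ∃ n : ℕ, x ≤ a * 2 ^ (n + 1) := by
    obtain ⟨n, hn⟩ := pow_unbounded_of_one_lt (x / a) one_lt_two
    refine ⟨n, ?_⟩
    rw [div_lt_iff₀ ha] at hn
    nlinarith [mul_le_mul_of_nonneg_left
      (pow_le_pow_right₀ (one_le_two (α := ℝ)) (n.le_add_right 1)) ha.le]
  refine ⟨Nat.find h, ?_, Nat.find_spec h⟩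
  cases hm : Nat.find h with
  | zero => simpa using hx
  | succ k => simpa using Nat.find_min h (hm ▸ k.lt_succ_self)

section TailMoment

variable {E : Type*} [NormedAddCommGroup E] [MeasurableSpace E]

theorem setLIntegral_norm_rpow_gt_le {κ : Measure E} {C σ s r : ℝ} (hC : 0 ≤ C) (hs : 0 ≤ s)
    (hsσ : s < σ) (hr : 0 < r)
    (htail : ∀ t : ℝ, 0 < t → κ {y | t < ‖y‖} ≤ ENNReal.ofReal (C * t ^ (-σ))) :
    ∫⁻ y in {y : E | r < ‖y‖}, ENNReal.ofReal (‖y‖ ^ s) ∂κ ≤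
      ENNReal.ofReal (C * 2 ^ s / (1 - 2 ^ (s - σ)) * r ^ (s - σ)) := by
  set q : ℝ := 2 ^ (s - σ)
  have hq0 : 0 ≤ q := by positivity
  have hq1 : q < 1 := Real.rpow_lt_one_of_one_lt_of_neg one_lt_two (by linarith)
  set shell : ℕ → Set E := fun n ↦ {y | r * 2 ^ n < ‖y‖ ∧ ‖y‖ ≤ r * 2 ^ (n + 1)}
  have hcover : {y : E | r < ‖y‖} ⊆ ⋃ n, shell n := fun y hy ↦
    mem_iUnion.2 (exists_two_pow_lt_le hr hy)
  have hshell : ∀ n, ∫⁻ y in shell n, ENNReal.ofReal (‖y‖ ^ s) ∂κ ≤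
      ENNReal.ofReal (C * 2 ^ s * r ^ (s - σ) * q ^ n) := by
    intro n
    have ht : 0 < r * 2 ^ n := by positivity
    calc ∫⁻ y in shell n, ENNReal.ofReal (‖y‖ ^ s) ∂κ
        ≤ ∫⁻ _ in shell n, ENNReal.ofReal ((2 * (r * 2 ^ n)) ^ s) ∂κ :=
          setLIntegral_mono measurable_const fun y hy ↦ ENNReal.ofReal_le_ofReal <|
                  Real.rpow_le_rpow (norm_nonneg y) (by rw [mul_left_comm, ← pow_succ']; exact hy.2) hs
      _ ≤ ENNReal.ofReal ((2 * (r * 2 ^ n)) ^ s) * ENNReal.ofReal (C * (r * 2 ^ n) ^ (-σ)) := by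
          rw [setLIntegral_const]
          gcongr
          exact (measure_mono fun y hy ↦ hy.1).trans (htail _ ht)
      _ = ENNReal.ofReal (C * 2 ^ s * r ^ (s - σ) * q ^ n) := by
          rw [← ENNReal.ofReal_mul (by positivity), Real.mul_rpow zero_le_two ht.le,
            Real.mul_rpow hr.le (by positivity), Real.mul_rpow hr.le (by positivity),
            ← Real.rpow_pow_comm zero_le_two, ← Real.rpow_pow_comm zero_le_two,
            show q = 2 ^ s * 2 ^ (-σ) by rw [← Real.rpow_add two_pos, ← sub_eq_add_neg],
            sub_eq_add_neg, Real.rpow_add hr, mul_pow]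
          congr 1
          ring
  calc ∫⁻ y in {y : E | r < ‖y‖}, ENNReal.ofReal (‖y‖ ^ s) ∂κ
      ≤ ∑' n, ∫⁻ y in shell n, ENNReal.ofReal (‖y‖ ^ s) ∂κ :=
        (lintegral_mono_set hcover).trans (lintegral_iUnion_le _ _)
    _ ≤ ∑' n, ENNReal.ofReal (C * 2 ^ s * r ^ (s - σ) * q ^ n) := ENNReal.tsum_le_tsum hshell
    _ = ENNReal.ofReal (C * 2 ^ s / (1 - q) * r ^ (s - σ)) := by
        rw [← ENNReal.ofReal_tsum_of_nonneg (fun n ↦ by positivity)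
          ((summable_geometric_of_lt_one hq0 hq1).mul_left _), tsum_mul_left,
          tsum_geometric_of_lt_one hq0 hq1]
        congr 1
        ring

end TailMoment

theorem norm_one_sub_exp_I_mul_le {s : ℝ} (hs0 : 0 ≤ s) (hs1 : s ≤ 1) (θ : ℝ) :
    ‖1 - Complex.exp (Complex.I * θ)‖ ≤ 2 * |θ| ^ s := by
  rcases le_or_gt |θ| 1 with hθ | hθ
  · calc ‖1 - Complex.exp (Complex.I * θ)‖ ≤ |θ| := by
          rw [norm_sub_rev]; exact Real.norm_exp_I_mul_ofReal_sub_one_le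
      _ ≤ |θ| ^ s := Real.self_le_rpow_of_le_one (abs_nonneg θ) hθ hs1
      _ ≤ 2 * |θ| ^ s := by linarith [Real.rpow_nonneg (abs_nonneg θ) s]
  · calc ‖1 - Complex.exp (Complex.I * θ)‖ ≤ ‖(1 : ℂ)‖ + ‖Complex.exp (Complex.I * θ)‖ :=
          norm_sub_le _ _
      _ = 2 := by rw [Complex.norm_exp_I_mul_ofReal, norm_one]; norm_num
      _ ≤ 2 * |θ| ^ s := by linarith [Real.one_le_rpow hθ.le hs0]

theorem norm_setIntegral_one_sub_exp_inner_le {E : Type*} [NormedAddCommGroup E]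
    [InnerProductSpace ℝ E] [MeasurableSpace E] {κ : Measure E} {S : Set E} {s M : ℝ}
    (hs0 : 0 ≤ s) (hs1 : s ≤ 1) (hM : 0 ≤ M)
    (hmoment : ∫⁻ y in S, ENNReal.ofReal (‖y‖ ^ s) ∂κ ≤ ENNReal.ofReal M) (ξ : E) :
    ‖∫ y in S, (1 - Complex.exp (Complex.I * (⟪ξ, y⟫_ℝ : ℂ))) ∂κ‖ ≤ 2 * ‖ξ‖ ^ s * M := by
  have hpoint : ∀ y : E, ENNReal.ofReal ‖1 - Complex.exp (Complex.I * (⟪ξ, y⟫_ℝ : ℂ))‖ ≤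
      ENNReal.ofReal (2 * ‖ξ‖ ^ s) * ENNReal.ofReal (‖y‖ ^ s) := fun y ↦ by
    rw [← ENNReal.ofReal_mul (by positivity), mul_assoc, ← Real.mul_rpow (norm_nonneg ξ)
      (norm_nonneg y)]
    refine ENNReal.ofReal_le_ofReal ((norm_one_sub_exp_I_mul_le hs0 hs1 _).trans ?_)
    gcongr
    exact abs_real_inner_le_norm ξ y
  have hlint : ∫⁻ y in S, ENNReal.ofReal ‖1 - Complex.exp (Complex.I * (⟪ξ, y⟫_ℝ : ℂ))‖ ∂κ ≤
      ENNReal.ofReal (2 * ‖ξ‖ ^ s * M) := by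
    calc _ ≤ ∫⁻ y in S, ENNReal.ofReal (2 * ‖ξ‖ ^ s) * ENNReal.ofReal (‖y‖ ^ s) ∂κ :=
          lintegral_mono hpoint
      _ = ENNReal.ofReal (2 * ‖ξ‖ ^ s) * ∫⁻ y in S, ENNReal.ofReal (‖y‖ ^ s) ∂κ :=
          lintegral_const_mul' _ _ ENNReal.ofReal_ne_top
      _ ≤ ENNReal.ofReal (2 * ‖ξ‖ ^ s * M) := by
          rw [ENNReal.ofReal_mul (p := 2 * ‖ξ‖ ^ s) (by positivity)]
          gcongr
  refine (norm_integral_le_lintegral_norm _).trans ?_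
  rw [← ENNReal.toReal_ofReal (by positivity : 0 ≤ 2 * ‖ξ‖ ^ s * M)]
  exact ENNReal.toReal_mono ENNReal.ofReal_ne_top hlint

section StableTail

variable {E : Type*} [NormedAddCommGroup E] [NormedSpace ℝ E] [FiniteDimensional ℝ E]
  [MeasurableSpace E] [BorelSpace E] [Nontrivial E] (μ : Measure E) [μ.IsAddHaarMeasure]

theorem setLIntegral_norm_rpow_gt {p r : ℝ} (hp : p + Module.finrank ℝ E < 0) (hr : 0 < r) :
    ∫⁻ x in {x : E | r < ‖x‖}, ENNReal.ofReal (‖x‖ ^ p) ∂μ =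
      ENNReal.ofReal (Module.finrank ℝ E * μ.real (ball 0 1) *
        (r ^ (p + Module.finrank ℝ E) / -(p + Module.finrank ℝ E))) := by
  set n := Module.finrank ℝ E
  set g : ℝ → ℝ := (Ioi r).indicator (· ^ p)
  have hn : 1 ≤ n := Module.finrank_pos
  have hradial : ∀ t ∈ Ioi (0 : ℝ), t ^ (n - 1) • g t = (Ioi r).indicator (· ^ (p + n - 1)) t := by
    intro t (ht : 0 < t)
    by_cases htr : r < t
    · simp only [g, indicator_of_mem (mem_Ioi.2 htr), smul_eq_mul, ← Real.rpow_natCast,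
        Nat.cast_sub hn, ← Real.rpow_add ht]
      congr 1
      ring
    · simp [g, htr]
  have hexp : p + n - 1 < -1 := by linarith
  have hint : IntegrableOn (fun t : ℝ ↦ t ^ (n - 1) • g t) (Ioi 0) := by
    rw [integrableOn_congr_fun hradial measurableSet_Ioi, IntegrableOn,
      integrable_indicator_iff measurableSet_Ioi]
    exact (integrableOn_Ioi_rpow_of_lt hexp hr).mono_measure Measure.restrict_le_self
  have hg : ∫ t in Ioi (0 : ℝ), t ^ (n - 1) • g t = r ^ (p + n) / -(p + n) := by
    rw [setIntegral_congr_fun measurableSet_Ioi hradial, setIntegral_indicator measurableSet_Ioi,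
      Ioi_inter_Ioi, sup_of_le_right hr.le, integral_Ioi_rpow_of_lt hexp hr,
      sub_add_cancel, neg_div, div_neg]
  rw [← lintegral_indicator (measurableSet_lt measurable_const measurable_norm)]
  calc ∫⁻ x, {x : E | r < ‖x‖}.indicator (fun x ↦ ENNReal.ofReal (‖x‖ ^ p)) x ∂μ
      = ∫⁻ x, ENNReal.ofReal (g ‖x‖) ∂μ := by
        congr 1 with x
        by_cases hx : r < ‖x‖ <;> simp [g, hx]
    _ = _ := by
        rw [← ofReal_integral_eq_lintegral_ofReal ((integrable_fun_norm_addHaar μ).2 hint)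
          (.of_forall fun x ↦ indicator_nonneg (fun t ht ↦ Real.rpow_nonneg (le_of_lt
            (hr.trans ht)) p) _), integral_fun_norm_addHaar μ g, hg, nsmul_eq_mul, smul_eq_mul,
          mul_assoc]

theorem withDensity_norm_rpow_neg_tail {σ r : ℝ} (hσ : 0 < σ) (hr : 0 < r) :
    μ.withDensity (fun x ↦ ENNReal.ofReal (‖x‖ ^ (-(Module.finrank ℝ E : ℝ) - σ))) {x | r < ‖x‖} =
      ENNReal.ofReal (Module.finrank ℝ E * μ.real (ball 0 1) / σ * r ^ (-σ)) := by
  rw [withDensity_apply _ (measurableSet_lt measurable_const measurable_norm),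
    setLIntegral_norm_rpow_gt μ (by linarith) hr,
    show -(Module.finrank ℝ E : ℝ) - σ + Module.finrank ℝ E = -σ by ring, neg_neg]
  congr 1
  ring

end StableTail

/-- For `μ = ν + |y|^{-d-σ} dy`, the normalized truncated symbol satisfies
`(1/μ(B_r^c)) |∫_{|y|>r} (1 - e^{i ξ·y}) μ(dy)| ≤ N r^{σ/2} |ξ|^{σ/2}`. -/
theorem stmt_5 (d : ℕ) (hd : 0 < d) (ν : Measure (EuclideanSpace ℝ (Fin d)))
    (σ Λ : ℝ) (hσ : σ ∈ Set.Ioo (0:ℝ) 2) (hΛ : 1 ≤ Λ)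
    (hν : ∀ r : ℝ, 0 < r → ν {y | r < ‖y‖} ≤ ENNReal.ofReal (Λ * r ^ (-σ))) :
    ∃ N : ℝ, 0 < N ∧ ∀ r : ℝ, 0 < r → ∀ ξ : EuclideanSpace ℝ (Fin d),
      (let μ : Measure (EuclideanSpace ℝ (Fin d)) :=
        ν + volume.withDensity (fun y => ENNReal.ofReal (‖y‖ ^ (-(d:ℝ) - σ)))
      ‖∫ y in {y | r < ‖y‖}, (1 - Complex.exp (Complex.I * (⟪ξ, y⟫_ℝ : ℂ))) ∂μ‖
        ≤ N * r ^ (σ / 2) * ‖ξ‖ ^ (σ / 2) * (μ {y | r < ‖y‖}).toReal) := by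
  obtain ⟨hσ0, hσ2⟩ := hσ
  have : Nontrivial (EuclideanSpace ℝ (Fin d)) :=
    Module.nontrivial_of_finrank_pos (R := ℝ) (by simpa using hd)
  set c : ℝ := d * volume.real (ball (0 : EuclideanSpace ℝ (Fin d)) 1) / σ
  have hc : 0 < c := by
    have : 0 < volume.real (ball (0 : EuclideanSpace ℝ (Fin d)) 1) :=
      ENNReal.toReal_pos (measure_ball_pos _ _ one_pos).ne' measure_ball_lt_top.ne
    positivity
  have hstable := fun (r : ℝ) (hr : 0 < r) ↦
    withDensity_norm_rpow_neg_tail (volume : Measure (EuclideanSpace ℝ (Fin d))) hσ0 hr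
  simp only [finrank_euclideanSpace_fin] at hstable
  set M : ℝ := (Λ + c) * 2 ^ (σ / 2) / (1 - 2 ^ (σ / 2 - σ))
  have hM : 0 < M := div_pos (mul_pos (by linarith) (by positivity))
    (sub_pos.2 (Real.rpow_lt_one_of_one_lt_of_neg one_lt_two (by linarith)))
  refine ⟨2 * M / c, by positivity, fun r hr ξ ↦ ?_⟩
  intro μ
  have htail : ∀ t : ℝ, 0 < t → μ {y | t < ‖y‖} ≤ ENNReal.ofReal ((Λ + c) * t ^ (-σ)) := by
    intro t ht
    rw [Measure.add_apply, hstable t ht, add_mul,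
      ENNReal.ofReal_add (by positivity) (by positivity)]
    gcongr
    exact hν t ht
  have hlow : c * r ^ (-σ) ≤ (μ {y | r < ‖y‖}).toReal := by
    refine (ENNReal.ofReal_le_iff_le_toReal (ne_top_of_le_ne_top ENNReal.ofReal_ne_top
      (htail r hr))).1 ?_
    rw [← hstable r hr, Measure.add_apply]
    exact le_add_self
  have hmoment :=
    setLIntegral_norm_rpow_gt_le (s := σ / 2) (by linarith) (by positivity) (by linarith) hr htail
  calc _ ≤ 2 * ‖ξ‖ ^ (σ / 2) * (M * r ^ (σ / 2 - σ)) :=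
        norm_setIntegral_one_sub_exp_inner_le (by positivity) (by linarith) (by positivity)
          hmoment ξ
    _ = 2 * M / c * r ^ (σ / 2) * ‖ξ‖ ^ (σ / 2) * (c * r ^ (-σ)) := by
        rw [sub_eq_add_neg, Real.rpow_add hr]
        field_simp
    _ ≤ _ := by gcongr
end

section
/- Let σ ∈ (0,2), T ∈ (0,∞), and let u : [0,T] × ℝ^d → ℝ be smooth and compactly supported with u(0,·) = 0, satisfying ∂_t u = L_t u − λu + f on (0,T) × ℝ^d, where λ ≥ 0 and L_t has symbol m(t,ξ) with Re m(t,ξ) ≤ −N₁|ξ|^σ for some N₁ > 0. Then ‖(−Δ)^{σ/2} u‖_{L_2((0,T)×ℝ^d)} ≤ N(N₁) ‖f‖_{L_2((0,T)×ℝ^d)}. -/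
set_option maxHeartbeats 1000000
open MeasureTheory Metric Set
open scoped FourierTransform ENNReal RealInnerProductSpace

noncomputable section

lemma joint_cont {d : ℕ} (v : ℝ → EuclideanSpace ℝ (Fin d) → ℂ)
    (hc : Continuous (fun q : ℝ × EuclideanSpace ℝ (Fin d) => v q.1 q.2))
    (hs : HasCompactSupport (fun q : ℝ × EuclideanSpace ℝ (Fin d) => v q.1 q.2)) :
    Continuous (fun q : ℝ × EuclideanSpace ℝ (Fin d) => 𝓕 (v q.1) q.2) := by
  obtain ⟨C, hC⟩ := hs.exists_bound_of_continuous hc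
  set K : Set (EuclideanSpace ℝ (Fin d)) :=
    Prod.snd '' tsupport (fun q : ℝ × EuclideanSpace ℝ (Fin d) => v q.1 q.2) with hK
  have hKc : IsCompact K := hs.image continuous_snd
  have hbound : ∀ (t : ℝ) (x : EuclideanSpace ℝ (Fin d)),
      ‖v t x‖ ≤ K.indicator (fun _ => C) x := by
    intro t x
    by_cases hx : x ∈ K
    · rw [Set.indicator_of_mem hx]; exact hC (t, x)
    · rw [Set.indicator_of_notMem hx]
      have : (t, x) ∉ tsupport (fun q : ℝ × EuclideanSpace ℝ (Fin d) => v q.1 q.2) := by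
        intro h; exact hx ⟨(t, x), h, rfl⟩
      have := image_eq_zero_of_notMem_tsupport this
      simp only [this, norm_zero, le_refl]
  have key : Continuous (fun q : ℝ × EuclideanSpace ℝ (Fin d) =>
      ∫ x, (Real.fourierChar (-⟪x, q.2⟫) : ℂ) • v q.1 x) := by
    apply continuous_of_dominated (bound := K.indicator (fun _ => C))
    · intro q
      apply Continuous.aestronglyMeasurable
      apply Continuous.fun_smul
      · exact continuous_induced_dom.comp (Real.continuous_fourierChar.comp
          (((continuous_id.inner continuous_const)).neg))
      · exact hc.comp (continuous_const.prodMk continuous_id')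
    · intro q
      filter_upwards with x
      rw [norm_smul]
      simpa [Circle.norm_coe] using hbound q.1 x
    · exact (integrable_indicator_iff hKc.measurableSet).2 (integrableOn_const hKc.measure_lt_top.ne)
    · filter_upwards with x
      apply Continuous.fun_smul
      · exact continuous_induced_dom.comp (Real.continuous_fourierChar.comp
          ((continuous_const.inner continuous_snd).neg))
      · exact hc.comp (continuous_fst.prodMk continuous_const)
  simpa only [Real.fourier_eq, Circle.smul_def] using key

lemma ode_est (T a : ℝ) (hT : 0 < T) (g φ D : ℝ → ℂ)
    (hg : Continuous g) (hφ : Continuous φ) (hg0 : g 0 = 0)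
    (hD : ∀ t ∈ Ioo 0 T, HasDerivAt g (D t) t)
    (hRe : ∀ t ∈ Ioo 0 T, ((starRingEnd ℂ) (g t) * D t).re ≤ -a * ‖g t‖ ^ 2 + ‖g t‖ * ‖φ t‖) :
    a * ∫ t in Ioo 0 T, ‖g t‖ ^ 2 ≤ ∫ t in Ioo 0 T, ‖g t‖ * ‖φ t‖ := by
  set h : ℝ → ℝ := fun t => ‖g t‖ ^ 2 with hh
  have hhc : Continuous h := (hg.norm).pow 2
  set c : ℝ → ℝ := fun t => ‖g t‖ * ‖φ t‖ with hcdef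
  have hcc : Continuous c := hg.norm.mul hφ.norm
  set H : ℝ → ℝ := fun t => h t + 2 * a * (∫ s in (0:ℝ)..t, h s) - 2 * ∫ s in (0:ℝ)..t, c s
    with hHdef
  -- derivative of h
  have hhderiv : ∀ t ∈ Ioo 0 T,
      HasDerivAt h (2 * ((starRingEnd ℂ) (g t) * D t).re) t := by
    intro t ht
    have hgd := hD t ht
    have hre : HasDerivAt (fun s => (g s).re) ((D t).re) t :=
      (Complex.reCLM.hasFDerivAt.comp_hasDerivAt t hgd)
    have him : HasDerivAt (fun s => (g s).im) ((D t).im) t :=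
      (Complex.imCLM.hasFDerivAt.comp_hasDerivAt t hgd)
    have : HasDerivAt (fun s => (g s).re ^ 2 + (g s).im ^ 2)
        (2 * (g t).re * (D t).re + 2 * (g t).im * (D t).im) t := by
      have h1 := (hre.fun_pow 2)
      have h2 := (him.fun_pow 2)
      simpa [mul_comm, mul_assoc, mul_left_comm, Pi.add_def] using h1.add h2
    have heq : h = fun s => (g s).re ^ 2 + (g s).im ^ 2 := by
      funext s
      simp only [hh, Complex.sq_norm, Complex.normSq_apply]
      ring
    rw [heq]
    convert this using 1
    simp [Complex.mul_re]
    ring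
  have hHderiv : ∀ t ∈ Ioo 0 T, HasDerivAt H
      (2 * ((starRingEnd ℂ) (g t) * D t).re + 2 * a * h t - 2 * c t) t := by
    intro t ht
    exact (((hhderiv t ht).add
      ((hhc.integral_hasStrictDerivAt 0 t).hasDerivAt.const_mul (2*a))).sub
      ((hcc.integral_hasStrictDerivAt 0 t).hasDerivAt.const_mul 2))
  have hanti : AntitoneOn H (Icc 0 T) := by
    apply antitoneOn_of_deriv_nonpos (convex_Icc 0 T)
    · apply Continuous.continuousOn
      apply Continuous.sub
      · exact hhc.add (continuous_const.mul (intervalIntegral.continuous_primitive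
          (fun a b => hhc.intervalIntegrable a b) 0))
      · exact continuous_const.mul (intervalIntegral.continuous_primitive
          (fun a b => hcc.intervalIntegrable a b) 0)
    · intro t ht
      rw [interior_Icc] at ht
      exact ((hHderiv t ht).differentiableAt).differentiableWithinAt
    · intro t ht
      rw [interior_Icc] at ht
      rw [(hHderiv t ht).deriv]
      have e1 : h t = ‖g t‖ ^ 2 := rfl
      have e2 : c t = ‖g t‖ * ‖φ t‖ := rfl
      have hb := hRe t ht
      rw [← e1, ← e2] at hb
      linarith
  have hH0 : H 0 = 0 := by
    simp [hHdef, hh, hg0]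
  have hHT : H T ≤ 0 := by
    have := hanti (left_mem_Icc.2 hT.le) (right_mem_Icc.2 hT.le) hT.le
    rw [hH0] at this
    exact this
  have hTnn : (0:ℝ) ≤ T := hT.le
  have hint1 : (∫ s in (0:ℝ)..T, h s) = ∫ t in Ioo 0 T, h t := by
    rw [intervalIntegral.integral_of_le hTnn, MeasureTheory.integral_Ioc_eq_integral_Ioo]
  have hint2 : (∫ s in (0:ℝ)..T, c s) = ∫ t in Ioo 0 T, c t := by
    rw [intervalIntegral.integral_of_le hTnn, MeasureTheory.integral_Ioc_eq_integral_Ioo]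
  have hhT : 0 ≤ h T := sq_nonneg _
  simp only [hHdef, hint1, hint2] at hHT
  linarith

/-- Energy estimate for the parabolic Fourier-multiplier equation
`∂_t u = L_t u - λ u + f`, `u(0,·)=0`, where `L_t` has symbol `m(t,ξ)` with
`Re m(t,ξ) ≤ -N₁ |ξ|^σ`: in Fourier variables,
`∫_0^T ∫ |ξ|^{2σ} |û|² ≤ N(N₁)² ∫_0^T ∫ |f̂|²`. -/
theorem stmt_13 (d : ℕ) (σ T N₁ : ℝ) (hσ : σ ∈ Set.Ioo (0:ℝ) 2) (hT : 0 < T)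
    (hN₁ : 0 < N₁) :
    ∃ N : ℝ, 0 < N ∧
      ∀ (lam : ℝ), 0 ≤ lam →
      ∀ (u f : ℝ → EuclideanSpace ℝ (Fin d) → ℂ)
        (m : ℝ → EuclideanSpace ℝ (Fin d) → ℂ),
        ContDiff ℝ (⊤ : ℕ∞) (fun q : ℝ × EuclideanSpace ℝ (Fin d) => u q.1 q.2) →
        HasCompactSupport (fun q : ℝ × EuclideanSpace ℝ (Fin d) => u q.1 q.2) →
        Continuous (fun q : ℝ × EuclideanSpace ℝ (Fin d) => f q.1 q.2) →
        HasCompactSupport (fun q : ℝ × EuclideanSpace ℝ (Fin d) => f q.1 q.2) →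
        (∀ x, u 0 x = 0) →
        (∀ t ξ, (m t ξ).re ≤ -N₁ * ‖ξ‖ ^ σ) →
        (∀ t ∈ Set.Ioo 0 T, ∀ ξ,
          HasDerivAt (fun s => 𝓕 (u s) ξ)
            (m t ξ * 𝓕 (u t) ξ - (lam : ℂ) * 𝓕 (u t) ξ + 𝓕 (f t) ξ) t) →
        (∫⁻ t in Set.Ioo 0 T, ∫⁻ ξ,
            ENNReal.ofReal (‖ξ‖ ^ (2 * σ)) * (‖𝓕 (u t) ξ‖₊ : ℝ≥0∞) ^ 2)
          ≤ ENNReal.ofReal (N ^ 2) *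
              ∫⁻ t in Set.Ioo 0 T, ∫⁻ ξ, (‖𝓕 (f t) ξ‖₊ : ℝ≥0∞) ^ 2 := by
  refine ⟨N₁⁻¹, inv_pos.2 hN₁, ?_⟩
  intro lam hlam u f m hucd hucs hfc hfcs hu0 hm hode
  have hσ2 : (0:ℝ) ≤ 2 * σ := by linarith [hσ.1]
  have hFu : Continuous (fun q : ℝ × EuclideanSpace ℝ (Fin d) => 𝓕 (u q.1) q.2) :=
    joint_cont u hucd.continuous hucs
  have hFf : Continuous (fun q : ℝ × EuclideanSpace ℝ (Fin d) => 𝓕 (f q.1) q.2) :=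
    joint_cont f hfc hfcs
  -- real-valued per-ξ estimate
  have key : ∀ ξ : EuclideanSpace ℝ (Fin d),
      (∫ t in Ioo 0 T, ‖ξ‖ ^ (2*σ) * ‖𝓕 (u t) ξ‖ ^ 2)
        ≤ N₁⁻¹ ^ 2 * ∫ t in Ioo 0 T, ‖𝓕 (f t) ξ‖ ^ 2 := by
    intro ξ
    set g : ℝ → ℂ := fun t => 𝓕 (u t) ξ with hgdef
    set φ : ℝ → ℂ := fun t => 𝓕 (f t) ξ with hφdef
    have hgc : Continuous g := by
      have e : g = (fun q : ℝ × EuclideanSpace ℝ (Fin d) => 𝓕 (u q.1) q.2) ∘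
          (fun t => (t, ξ)) := rfl
      rw [e]; exact hFu.comp (continuous_id.prodMk continuous_const)
    have hφc : Continuous φ := by
      have e : φ = (fun q : ℝ × EuclideanSpace ℝ (Fin d) => 𝓕 (f q.1) q.2) ∘
          (fun t => (t, ξ)) := rfl
      rw [e]; exact hFf.comp (continuous_id.prodMk continuous_const)
    have hg0 : g 0 = 0 := by
      have hu0' : u 0 = fun _ => (0:ℂ) := funext hu0
      simp [hgdef, Real.fourier_eq, hu0']
    set b : ℝ := ‖ξ‖ ^ σ with hbdef
    have hb : 0 ≤ b := Real.rpow_nonneg (norm_nonneg ξ) σ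
    have hb2 : ‖ξ‖ ^ (2*σ) = b ^ 2 := by
      rw [hbdef, mul_comm, Real.rpow_mul (norm_nonneg ξ), Real.rpow_two]
    have hRe : ∀ t ∈ Ioo 0 T,
        ((starRingEnd ℂ) (g t) * (m t ξ * g t - (lam:ℂ) * g t + φ t)).re
          ≤ -(N₁ * b) * ‖g t‖ ^ 2 + ‖g t‖ * ‖φ t‖ := by
      intro t ht
      have h1 : ((starRingEnd ℂ) (g t) * (m t ξ * g t - (lam:ℂ) * g t + φ t)).re
          = (m t ξ).re * ‖g t‖ ^ 2 - lam * ‖g t‖ ^ 2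
            + ((starRingEnd ℂ) (g t) * φ t).re := by
        simp only [Complex.mul_re, Complex.sub_re, Complex.add_re, Complex.sub_im,
          Complex.add_im, Complex.mul_im, Complex.conj_re, Complex.conj_im,
          Complex.ofReal_re, Complex.ofReal_im, Complex.sq_norm,
          Complex.normSq_apply]
        ring
      have h2 : ((starRingEnd ℂ) (g t) * φ t).re ≤ ‖g t‖ * ‖φ t‖ := by
        calc ((starRingEnd ℂ) (g t) * φ t).re ≤ ‖(starRingEnd ℂ) (g t) * φ t‖ :=
              Complex.re_le_norm _
          _ = ‖g t‖ * ‖φ t‖ := by rw [norm_mul, RCLike.norm_conj]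
      have h3 : (m t ξ).re * ‖g t‖ ^ 2 ≤ -(N₁ * b) * ‖g t‖ ^ 2 := by
        apply mul_le_mul_of_nonneg_right _ (sq_nonneg _)
        simpa [hbdef, neg_mul] using hm t ξ
      have h4 : 0 ≤ lam * ‖g t‖ ^ 2 := mul_nonneg hlam (sq_nonneg _)
      rw [h1]; linarith
    have est := ode_est T (N₁ * b) hT g φ
        (fun t => m t ξ * g t - (lam:ℂ) * g t + φ t) hgc hφc hg0
        (fun t ht => hode t ht ξ) hRe
    -- integrability
    have Ig2 : IntegrableOn (fun t => ‖g t‖ ^ 2) (Ioo 0 T) :=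
      ((hgc.norm.pow 2).integrableOn_Icc (a := 0) (b := T)).mono_set Ioo_subset_Icc_self
    have Iφ2 : IntegrableOn (fun t => ‖φ t‖ ^ 2) (Ioo 0 T) :=
      ((hφc.norm.pow 2).integrableOn_Icc (a := 0) (b := T)).mono_set Ioo_subset_Icc_self
    have Igφ : IntegrableOn (fun t => ‖g t‖ * ‖φ t‖) (Ioo 0 T) :=
      ((hgc.norm.mul hφc.norm).integrableOn_Icc (a := 0) (b := T)).mono_set
        Ioo_subset_Icc_self
    have young : (∫ t in Ioo 0 T, 2 * N₁ * b * (‖g t‖ * ‖φ t‖))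
        ≤ ∫ t in Ioo 0 T, (N₁ ^ 2 * b ^ 2 * ‖g t‖ ^ 2 + ‖φ t‖ ^ 2) := by
      apply integral_mono (Igφ.const_mul _) ((Ig2.const_mul _).add Iφ2)
      intro t
      simp only [Pi.add_apply]
      nlinarith [sq_nonneg (N₁ * b * ‖g t‖ - ‖φ t‖)]
    rw [integral_const_mul, integral_add (Ig2.const_mul _) Iφ2,
      integral_const_mul] at young
    set A := ∫ t in Ioo 0 T, ‖g t‖ ^ 2 with hA
    set B := ∫ t in Ioo 0 T, ‖φ t‖ ^ 2 with hB
    set C := ∫ t in Ioo 0 T, ‖g t‖ * ‖φ t‖ with hC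
    -- est : N₁ * b * A ≤ C ; young : 2 N₁ b C ≤ N₁² b² A + B
    have goal1 : N₁ ^ 2 * (b ^ 2 * A) ≤ B := by
      nlinarith [mul_le_mul_of_nonneg_left est (mul_nonneg hN₁.le hb)]
    have hgoal : b ^ 2 * A ≤ N₁⁻¹ ^ 2 * B := by
      rw [inv_pow]
      rw [le_inv_mul_iff₀ (pow_pos hN₁ 2)]
      linarith
    calc (∫ t in Ioo 0 T, ‖ξ‖ ^ (2*σ) * ‖g t‖ ^ 2) = b ^ 2 * A := by
          rw [hA, ← integral_const_mul]
          exact integral_congr_ae (Filter.Eventually.of_forall fun t => by rw [hb2])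
      _ ≤ N₁⁻¹ ^ 2 * B := hgoal
  -- pass to lintegrals, per ξ
  have keyE : ∀ ξ : EuclideanSpace ℝ (Fin d),
      (∫⁻ t in Ioo 0 T, ENNReal.ofReal (‖ξ‖ ^ (2*σ)) * (‖𝓕 (u t) ξ‖₊ : ℝ≥0∞) ^ 2)
        ≤ ENNReal.ofReal (N₁⁻¹ ^ 2) *
            ∫⁻ t in Ioo 0 T, (‖𝓕 (f t) ξ‖₊ : ℝ≥0∞) ^ 2 := by
    intro ξ
    have hgc : Continuous (fun t => 𝓕 (u t) ξ) := by
      have e : (fun t => 𝓕 (u t) ξ) =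
          (fun q : ℝ × EuclideanSpace ℝ (Fin d) => 𝓕 (u q.1) q.2) ∘ (fun t => (t, ξ)) := rfl
      rw [e]; exact hFu.comp (continuous_id.prodMk continuous_const)
    have hφc : Continuous (fun t => 𝓕 (f t) ξ) := by
      have e : (fun t => 𝓕 (f t) ξ) =
          (fun q : ℝ × EuclideanSpace ℝ (Fin d) => 𝓕 (f q.1) q.2) ∘ (fun t => (t, ξ)) := rfl
      rw [e]; exact hFf.comp (continuous_id.prodMk continuous_const)
    have Ig2 : IntegrableOn (fun t => ‖ξ‖ ^ (2*σ) * ‖𝓕 (u t) ξ‖ ^ 2) (Ioo 0 T) :=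
      ((continuous_const.mul (hgc.norm.pow 2)).integrableOn_Icc (a := 0) (b := T)).mono_set
        Ioo_subset_Icc_self
    have Iφ2 : IntegrableOn (fun t => ‖𝓕 (f t) ξ‖ ^ 2) (Ioo 0 T) :=
      ((hφc.norm.pow 2).integrableOn_Icc (a := 0) (b := T)).mono_set Ioo_subset_Icc_self
    have h1 : (∫⁻ t in Ioo 0 T, ENNReal.ofReal (‖ξ‖ ^ (2*σ)) * (‖𝓕 (u t) ξ‖₊ : ℝ≥0∞) ^ 2)
        = ENNReal.ofReal (∫ t in Ioo 0 T, ‖ξ‖ ^ (2*σ) * ‖𝓕 (u t) ξ‖ ^ 2) := by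
      rw [ofReal_integral_eq_lintegral_ofReal Ig2 (Filter.Eventually.of_forall fun t =>
        mul_nonneg (Real.rpow_nonneg (norm_nonneg ξ) _) (sq_nonneg _))]
      apply lintegral_congr fun t => ?_
      rw [ENNReal.ofReal_mul (Real.rpow_nonneg (norm_nonneg ξ) _),
        ENNReal.ofReal_pow (norm_nonneg _), ofReal_norm, enorm_eq_nnnorm]
    have h2 : (∫⁻ t in Ioo 0 T, (‖𝓕 (f t) ξ‖₊ : ℝ≥0∞) ^ 2)
        = ENNReal.ofReal (∫ t in Ioo 0 T, ‖𝓕 (f t) ξ‖ ^ 2) := by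
      rw [ofReal_integral_eq_lintegral_ofReal Iφ2 (Filter.Eventually.of_forall fun t =>
        sq_nonneg _)]
      apply lintegral_congr fun t => ?_
      rw [ENNReal.ofReal_pow (norm_nonneg _), ofReal_norm, enorm_eq_nnnorm]
    rw [h1, h2, ← ENNReal.ofReal_mul (by positivity)]
    exact ENNReal.ofReal_le_ofReal (key ξ)
  -- measurability for Tonelli swap
  have hmA : Measurable (fun p : ℝ × EuclideanSpace ℝ (Fin d) =>
      ENNReal.ofReal (‖p.2‖ ^ (2*σ)) * (‖𝓕 (u p.1) p.2‖₊ : ℝ≥0∞) ^ 2) := by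
    apply Measurable.fun_mul
    · exact ENNReal.measurable_ofReal.comp
        (((continuous_norm.comp continuous_snd).rpow_const
          (fun x => Or.inr hσ2)).measurable)
    · exact (hFu.measurable.nnnorm.coe_nnreal_ennreal).pow_const 2
  have hmB : Measurable (fun p : ℝ × EuclideanSpace ℝ (Fin d) =>
      (‖𝓕 (f p.1) p.2‖₊ : ℝ≥0∞) ^ 2) :=
    (hFf.measurable.nnnorm.coe_nnreal_ennreal).pow_const 2
  have swapA : (∫⁻ t in Ioo 0 T, ∫⁻ ξ,
        ENNReal.ofReal (‖ξ‖ ^ (2*σ)) * (‖𝓕 (u t) ξ‖₊ : ℝ≥0∞) ^ 2)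
      = ∫⁻ ξ, ∫⁻ t in Ioo 0 T,
        ENNReal.ofReal (‖ξ‖ ^ (2*σ)) * (‖𝓕 (u t) ξ‖₊ : ℝ≥0∞) ^ 2 :=
    lintegral_lintegral_swap hmA.aemeasurable
  have swapB : (∫⁻ t in Ioo 0 T, ∫⁻ ξ, (‖𝓕 (f t) ξ‖₊ : ℝ≥0∞) ^ 2)
      = ∫⁻ ξ, ∫⁻ t in Ioo 0 T, (‖𝓕 (f t) ξ‖₊ : ℝ≥0∞) ^ 2 :=
    lintegral_lintegral_swap hmB.aemeasurable
  rw [swapA, swapB]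
  calc (∫⁻ ξ, ∫⁻ t in Ioo 0 T,
        ENNReal.ofReal (‖ξ‖ ^ (2*σ)) * (‖𝓕 (u t) ξ‖₊ : ℝ≥0∞) ^ 2)
      ≤ ∫⁻ ξ, ENNReal.ofReal (N₁⁻¹ ^ 2) *
          ∫⁻ t in Ioo 0 T, (‖𝓕 (f t) ξ‖₊ : ℝ≥0∞) ^ 2 := lintegral_mono keyE
    _ = ENNReal.ofReal (N₁⁻¹ ^ 2) *
          ∫⁻ ξ, ∫⁻ t in Ioo 0 T, (‖𝓕 (f t) ξ‖₊ : ℝ≥0∞) ^ 2 :=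
        lintegral_const_mul' _ _ ENNReal.ofReal_ne_top
end
end

section
/- Let σ ∈ (1,2) and let (A_j)_{j≥0}, (F_j)_{j≥0} be sequences of nonnegative reals with A_j ≤ F_j + N Σ_{l=j+1}^∞ 2^{(1−σ)l} A_l for all j ≥ 0, where N > 0, and suppose Σ_j 2^{(1−σ)j} A_j < ∞. Then there exists N' = N'(N, σ) such that Σ_{j=0}^∞ 2^{(1−σ)j} A_j ≤ N' Σ_{j=0}^∞ 2^{(1−σ)j} F_j. -/
open scoped ENNReal

/-!
Write `T m = ∑_{l ≥ m} q^l A_l` with `q = 2^{1-σ} < 1`. Multiplying the hypothesis by `q^j`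
and summing over `j ≥ m`, the antitonicity of `T` bounds the error term by
`N q^m (1 - q)⁻¹ T m`, which is at most `T m / 2` for `m = j₀` large; since `T j₀ < ∞` it can be
absorbed, giving `T j₀ ≤ 2 ∑_j q^j F_j`. The finitely many levels below `j₀` are then climbed
with the one-step bound `T m ≤ ∑_j q^j F_j + (N + 1) T (m + 1)`.
-/

namespace ENNReal

theorem le_two_mul_of_le_add_inv_two_mul {x s : ℝ≥0∞} (hx : x ≠ ⊤) (h : x ≤ s + 2⁻¹ * x) :
    x ≤ 2 * s := by
  have half_le : x / 2 ≤ s := by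
    rw [← ENNReal.sub_half hx, tsub_le_iff_right, ENNReal.div_eq_inv_mul]
    exact h
  calc x = 2 * (x / 2) := (ENNReal.mul_div_cancel two_ne_zero ofNat_ne_top).symm
    _ ≤ 2 * s := by gcongr

theorem le_pow_mul_add_of_le_add_mul_succ {T : ℕ → ℝ≥0∞} {s b : ℝ≥0∞}
    (h : ∀ m, T m ≤ s + b * T (m + 1)) (k : ℕ) : T 0 ≤ (b + 2) ^ k * (s + T k) := by
  induction k with
  | zero => simp
  | succ k ih =>
    calc T 0 ≤ (b + 2) ^ k * (s + T k) := ih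
      _ ≤ (b + 2) ^ k * (s + (s + b * T (k + 1))) := by gcongr; exact h k
      _ ≤ (b + 2) ^ k * ((b + 2) * (s + T (k + 1))) := by
        gcongr
        calc s + (s + b * T (k + 1)) = 2 * s + b * T (k + 1) := by ring
          _ ≤ (b + 2) * s + (b + 2) * T (k + 1) := by gcongr <;> simp
          _ = (b + 2) * (s + T (k + 1)) := by ring
      _ = (b + 2) ^ (k + 1) * (s + T (k + 1)) := by ring

end ENNReal

noncomputable def tailSum (f : ℕ → ℝ≥0∞) (m : ℕ) : ℝ≥0∞ := ∑' l, f (l + m)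

section TailSum

variable (f : ℕ → ℝ≥0∞)

@[simp]
theorem tailSum_zero : tailSum f 0 = ∑' l, f l := rfl

theorem tailSum_eq_add_tailSum_succ (m : ℕ) : tailSum f m = f m + tailSum f (m + 1) := by
  rw [tailSum, tsum_eq_zero_add' ENNReal.summable, zero_add, tailSum]
  simp only [add_assoc, add_comm 1 m]

theorem tailSum_antitone : Antitone (tailSum f) :=
  antitone_nat_of_succ_le fun m => (tailSum_eq_add_tailSum_succ f m).symm ▸ le_add_self

theorem tsum_ite_lt_eq_tailSum_succ (j : ℕ) :
    ∑' l, (if j < l then f l else 0) = tailSum f (j + 1) := by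
  rw [← (Summable.sum_add_tsum_nat_add' (k := j + 1) ENNReal.summable)]
  have below : ∑ l ∈ Finset.range (j + 1), (if j < l then f l else 0) = 0 :=
    Finset.sum_eq_zero fun l hl => if_neg (by simpa [Nat.lt_succ_iff] using hl)
  rw [below, zero_add, tailSum]
  exact tsum_congr fun l => if_pos (by omega)

theorem tailSum_pow (q : ℝ≥0∞) (m : ℕ) : tailSum (q ^ ·) m = q ^ m * (1 - q)⁻¹ := by
  rw [tailSum, ← ENNReal.tsum_geometric, ← ENNReal.tsum_mul_left]
  simp only [pow_add, mul_comm]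

end TailSum

section Absorption

variable {q c : ℝ≥0∞} {A F : ℕ → ℝ≥0∞}

theorem tailSum_le_add_mul_tailSum
    (hA : ∀ j, A j ≤ F j + c * tailSum (fun l => q ^ l * A l) (j + 1)) (m : ℕ) :
    tailSum (fun l => q ^ l * A l) m ≤
      ∑' j, q ^ j * F j + c * (q ^ m * (1 - q)⁻¹) * tailSum (fun l => q ^ l * A l) m := by
  set T := tailSum fun l => q ^ l * A l
  have tail_F_le : tailSum (fun l => q ^ l * F l) m ≤ ∑' j, q ^ j * F j :=
    tailSum_zero (fun l => q ^ l * F l) ▸ tailSum_antitone _ (Nat.zero_le m)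
  calc T m ≤ ∑' l, (q ^ (l + m) * F (l + m) + c * T m * q ^ (l + m)) := by
        refine ENNReal.tsum_le_tsum fun l => ?_
        calc q ^ (l + m) * A (l + m)
            ≤ q ^ (l + m) * (F (l + m) + c * T (l + m + 1)) := by gcongr; exact hA _
          _ ≤ q ^ (l + m) * (F (l + m) + c * T m) := by
            gcongr; exact tailSum_antitone _ (by omega)
          _ = _ := by ring
    _ = tailSum (fun l => q ^ l * F l) m + c * T m * tailSum (q ^ ·) m := by
        rw [ENNReal.tsum_add, ENNReal.tsum_mul_left]; rfl
    _ ≤ ∑' j, q ^ j * F j + c * (q ^ m * (1 - q)⁻¹) * T m := by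
        rw [tailSum_pow, mul_right_comm]
        gcongr

theorem tailSum_le_add_mul_tailSum_succ (hq : q ≤ 1)
    (hA : ∀ j, A j ≤ F j + c * tailSum (fun l => q ^ l * A l) (j + 1)) (m : ℕ) :
    tailSum (fun l => q ^ l * A l) m ≤
      ∑' j, q ^ j * F j + (c + 1) * tailSum (fun l => q ^ l * A l) (m + 1) := by
  set T := tailSum fun l => q ^ l * A l
  have hqm : q ^ m ≤ 1 := pow_le_one₀ zero_le hq
  calc T m = q ^ m * A m + T (m + 1) := tailSum_eq_add_tailSum_succ _ m
    _ ≤ q ^ m * (F m + c * T (m + 1)) + T (m + 1) := by gcongr; exact hA m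
    _ = q ^ m * F m + q ^ m * (c * T (m + 1)) + T (m + 1) := by ring
    _ ≤ ∑' j, q ^ j * F j + 1 * (c * T (m + 1)) + T (m + 1) := by
        gcongr
        exact ENNReal.le_tsum (f := fun j => q ^ j * F j) m
    _ = ∑' j, q ^ j * F j + (c + 1) * T (m + 1) := by ring

theorem exists_tsum_pow_mul_le_of_le_add_tailSum (hq : q < 1) (hc : c ≠ ⊤) :
    ∃ n : ℕ, ∀ A F : ℕ → ℝ≥0∞,
      (∀ j, A j ≤ F j + c * tailSum (fun l => q ^ l * A l) (j + 1)) →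
      ∑' j, q ^ j * A j ≠ ⊤ →
      ∑' j, q ^ j * A j ≤ 3 * (c + 3) ^ n * ∑' j, q ^ j * F j := by
  have small : ∀ᶠ n in Filter.atTop, c * (q ^ n * (1 - q)⁻¹) < 2⁻¹ := by
    have hlim : Filter.Tendsto (fun n => c * (1 - q)⁻¹ * q ^ n) Filter.atTop (nhds 0) := by
      simpa using ENNReal.Tendsto.const_mul (ENNReal.tendsto_pow_atTop_nhds_zero_iff.2 hq)
        (Or.inr (ENNReal.mul_ne_top hc (ENNReal.inv_ne_top.2 (tsub_pos_of_lt hq).ne')))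
    filter_upwards [hlim.eventually (gt_mem_nhds (by norm_num : (0 : ℝ≥0∞) < 2⁻¹))] with n hn
    rwa [mul_assoc, mul_comm _ (q ^ n)] at hn
  obtain ⟨n, hn⟩ := small.exists
  refine ⟨n, fun A F hA hfin => ?_⟩
  set T := tailSum fun l => q ^ l * A l
  set SF := ∑' j, q ^ j * F j
  have T_ne_top : T n ≠ ⊤ := ne_top_of_le_ne_top hfin (tailSum_antitone _ (Nat.zero_le n))
  have T_le : T n ≤ 2 * SF := by
    refine ENNReal.le_two_mul_of_le_add_inv_two_mul T_ne_top
      ((tailSum_le_add_mul_tailSum hA n).trans ?_)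
    gcongr
  calc ∑' j, q ^ j * A j = T 0 := (tailSum_zero _).symm
    _ ≤ (c + 1 + 2) ^ n * (SF + T n) :=
        ENNReal.le_pow_mul_add_of_le_add_mul_succ (tailSum_le_add_mul_tailSum_succ hq.le hA) n
    _ ≤ (c + 3) ^ n * (SF + 2 * SF) := by rw [add_assoc]; gcongr; norm_num
    _ = 3 * (c + 3) ^ n * SF := by ring

end Absorption

theorem ofReal_two_rpow_mul_natCast (s : ℝ) (j : ℕ) :
    ENNReal.ofReal ((2 : ℝ) ^ (s * j)) = ENNReal.ofReal ((2 : ℝ) ^ s) ^ j := by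
  rw [← ENNReal.ofReal_pow (by positivity), ← Real.rpow_natCast, ← Real.rpow_mul zero_le_two]

theorem stmt_15_general (σ N : ℝ) (hσ : σ ∈ Set.Ioo (1:ℝ) 2) :
    ∃ N' : ℝ, 0 < N' ∧ ∀ A F : ℕ → ℝ≥0∞,
      (∀ j : ℕ, A j ≤ F j + ENNReal.ofReal N *
        ∑' l : ℕ, if j < l then ENNReal.ofReal ((2:ℝ) ^ ((1 - σ) * l)) * A l else 0) →
      (∑' j : ℕ, ENNReal.ofReal ((2:ℝ) ^ ((1 - σ) * j)) * A j ≠ ⊤) →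
      (∑' j : ℕ, ENNReal.ofReal ((2:ℝ) ^ ((1 - σ) * j)) * A j)
        ≤ ENNReal.ofReal N' * ∑' j : ℕ, ENNReal.ofReal ((2:ℝ) ^ ((1 - σ) * j)) * F j := by
  set c := ENNReal.ofReal N
  have hq : ENNReal.ofReal ((2 : ℝ) ^ (1 - σ)) < 1 := ENNReal.ofReal_lt_one.2
    (Real.rpow_lt_one_of_one_lt_of_neg one_lt_two (by linarith [hσ.1]))
  obtain ⟨n, hn⟩ := exists_tsum_pow_mul_le_of_le_add_tailSum hq ENNReal.ofReal_ne_top (c := c)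
  refine ⟨3 * (c.toReal + 3) ^ n, by positivity, fun A F hA hfin => ?_⟩
  simp only [ofReal_two_rpow_mul_natCast, tsum_ite_lt_eq_tailSum_succ] at hA hfin ⊢
  convert hn A F hA hfin using 2
  rw [ENNReal.ofReal_mul zero_le_three, ENNReal.ofReal_pow (by positivity),
    ENNReal.ofReal_add ENNReal.toReal_nonneg zero_le_three,
    ENNReal.ofReal_toReal ENNReal.ofReal_ne_top, ENNReal.ofReal_ofNat]

/-- Iteration/absorption lemma: if `A_j ≤ F_j + N Σ_{l>j} 2^{(1-σ)l} A_l` for all `j`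
and `Σ_j 2^{(1-σ)j} A_j < ∞`, then `Σ_j 2^{(1-σ)j} A_j ≤ N' Σ_j 2^{(1-σ)j} F_j`. -/
theorem stmt_15 (σ N : ℝ) (hσ : σ ∈ Set.Ioo (1:ℝ) 2) (hN : 0 < N) :
    ∃ N' : ℝ, 0 < N' ∧ ∀ A F : ℕ → ℝ≥0∞,
      (∀ j : ℕ, A j ≤ F j + ENNReal.ofReal N *
        ∑' l : ℕ, if j < l then ENNReal.ofReal ((2:ℝ) ^ ((1 - σ) * l)) * A l else 0) →
      (∑' j : ℕ, ENNReal.ofReal ((2:ℝ) ^ ((1 - σ) * j)) * A j ≠ ⊤) →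
      (∑' j : ℕ, ENNReal.ofReal ((2:ℝ) ^ ((1 - σ) * j)) * A j)
        ≤ ENNReal.ofReal N' * ∑' j : ℕ, ENNReal.ofReal ((2:ℝ) ^ ((1 - σ) * j)) * F j :=
  stmt_15_general σ N hσ
end

section
/- Let σ = 1 and let ν be a Lévy measure on ℝ^d satisfying ν(B_r^c) ≤ Λ/r for all r > 0 and the cancellation condition ∫_{r₁ ≤ |y| ≤ r₂} y dν(y) = 0 for all 0 < r₁ < r₂. Define m(ξ) = ∫(e^{iξ·y} − 1 − i ξ·y 1_{|y|≤1}) dν(y). Then |Im m(ξ)| = |∫ (sin(ξ·y) − ξ·y 1_{|y|≤1}) dν(y)| ≤ N(Λ) |ξ| for all ξ ∈ ℝ^d. -/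
open MeasureTheory Metric Set
open scoped InnerProductSpace ENNReal

noncomputable section

/-! The cancellation condition makes the truncation radius irrelevant: replacing the compensator
`ξ·y 1_{|y| ≤ 1}` by `ξ·y 1_{|y| ≤ r}` changes the integral by `⟪ξ, ∫_{annulus} y dν⟫ = 0`.
Take `r = |ξ|⁻¹`. On the ball `|sin x - x| ≤ |x|³/6 ≤ |ξ|² |y|² / 6`, and by the layer-cake
formula the tail bound gives `∫_{|y| ≤ r} |y|² dν ≤ 2Λr`; outside the ball `|sin| ≤ 1` and
`ν(|y| > r) ≤ Λ|ξ|`. -/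

section Tail

variable {α : Type*} [MeasurableSpace α] {μ : Measure α} {f : α → ℝ} {Λ : ℝ}

theorem setLIntegral_sq_le_of_tail_le (hf : Measurable f) (hf0 : 0 ≤ f) (hΛ : 0 ≤ Λ)
    (htail : ∀ t, 0 < t → μ {a | t < f a} ≤ ENNReal.ofReal (Λ / t)) (R : ℝ) :
    ∫⁻ a in {a | f a ≤ R}, ENNReal.ofReal (f a ^ 2) ∂μ ≤ ENNReal.ofReal (2 * Λ * R) := by
  set B := {a | f a ≤ R}
  have hlayer := lintegral_rpow_eq_lintegral_meas_lt_mul (μ.restrict B)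
    (Filter.Eventually.of_forall hf0) hf.aemeasurable (p := 2) two_pos
  norm_num only [Real.rpow_two, Real.rpow_one] at hlayer
  -- only levels `t ≤ R` contribute, each with weight at most `(Λ / t) * t = Λ`
  have hlevel : ∀ t ∈ Ioi (0 : ℝ), μ.restrict B {a | t < f a} * ENNReal.ofReal t ≤
      (Ioc 0 R).indicator (fun _ => ENNReal.ofReal Λ) t := by
    intro t (ht : 0 < t)
    rw [Measure.restrict_apply (measurableSet_lt measurable_const hf)]
    by_cases htR : t ≤ R
    · rw [indicator_of_mem (show t ∈ Ioc 0 R from ⟨ht, htR⟩)]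
      calc μ ({a | t < f a} ∩ B) * ENNReal.ofReal t
          ≤ ENNReal.ofReal (Λ / t) * ENNReal.ofReal t :=
            mul_le_mul_left (measure_mono inter_subset_left |>.trans (htail t ht)) _
        _ = ENNReal.ofReal Λ := by
            rw [← ENNReal.ofReal_mul (by positivity), div_mul_cancel₀ _ ht.ne']
    · have hempty : {a | t < f a} ∩ B = ∅ :=
        eq_empty_of_forall_notMem fun _ ha => htR (ha.1.le.trans ha.2)
      simp [hempty]
  calc ∫⁻ a in B, ENNReal.ofReal (f a ^ 2) ∂μ
      = ENNReal.ofReal 2 * ∫⁻ t in Ioi 0, μ.restrict B {a | t < f a} * ENNReal.ofReal t := hlayer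
    _ ≤ ENNReal.ofReal 2 * ∫⁻ t in Ioi 0, (Ioc 0 R).indicator (fun _ => ENNReal.ofReal Λ) t := by
        gcongr ENNReal.ofReal 2 * ?_
        exact setLIntegral_mono (measurable_const.indicator measurableSet_Ioc) hlevel
    _ = ENNReal.ofReal (2 * Λ * R) := by
        rw [lintegral_indicator measurableSet_Ioc, setLIntegral_const,
          Measure.restrict_apply measurableSet_Ioc,
          inter_eq_left.2 Ioc_subset_Ioi_self, Real.volume_Ioc, sub_zero,
          ENNReal.ofReal_mul (by positivity), ENNReal.ofReal_mul zero_le_two, mul_assoc]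

end Tail

section NormedSpace

variable {E : Type*} [NormedAddCommGroup E] [MeasurableSpace E] [OpensMeasurableSpace E]
  {ν : Measure E} {Λ : ℝ}

theorem integrableOn_norm_sq_of_tail_le (hΛ : 0 ≤ Λ)
    (hν : ∀ r, 0 < r → ν {y | r < ‖y‖} ≤ ENNReal.ofReal (Λ / r)) (R : ℝ) :
    IntegrableOn (fun y => ‖y‖ ^ 2) {y | ‖y‖ ≤ R} ν := by
  refine ⟨(measurable_norm.pow_const 2).aestronglyMeasurable, ?_⟩
  rw [hasFiniteIntegral_iff_ofReal (Filter.Eventually.of_forall fun _ => by positivity)]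
  exact (setLIntegral_sq_le_of_tail_le measurable_norm (fun y => norm_nonneg y) hΛ hν R).trans_lt
    ENNReal.ofReal_lt_top

theorem setIntegral_norm_sq_le_of_tail_le (hΛ : 0 ≤ Λ)
    (hν : ∀ r, 0 < r → ν {y | r < ‖y‖} ≤ ENNReal.ofReal (Λ / r)) {R : ℝ} (hR : 0 ≤ R) :
    ∫ y in {y | ‖y‖ ≤ R}, ‖y‖ ^ 2 ∂ν ≤ 2 * Λ * R := by
  rw [integral_eq_lintegral_of_nonneg_ae (Filter.Eventually.of_forall fun _ => by positivity)
    (measurable_norm.pow_const 2).aestronglyMeasurable]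
  exact ENNReal.toReal_le_of_le_ofReal (by positivity)
    (setLIntegral_sq_le_of_tail_le measurable_norm (fun y => norm_nonneg y) hΛ hν R)

theorem integrableOn_id_annulus [NormedSpace ℝ E] [SecondCountableTopology E] {a : ℝ}
    (hfin : ν {y | a < ‖y‖} ≠ ∞) (b : ℝ) :
    IntegrableOn (fun y => y) {y | a < ‖y‖ ∧ ‖y‖ ≤ b} ν :=
  Measure.integrableOn_of_bounded (M := b)
    (ne_top_of_le_ne_top hfin (measure_mono fun _ hy => hy.1))
    measurable_id.aestronglyMeasurable
    ((ae_restrict_iff' ((measurableSet_lt measurable_const measurable_norm).inter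
      (measurableSet_le measurable_norm measurable_const))).2
      (Filter.Eventually.of_forall fun _ hy => hy.2))

theorem setIntegral_annulus_eq_zero [NormedSpace ℝ E] [SecondCountableTopology E]
    {a b : ℝ} (ha : 0 < a) (hfin : ν {y | a < ‖y‖} ≠ ∞)
    (hcancel : ∀ r₁ r₂ : ℝ, 0 < r₁ → r₁ < r₂ → ∫ y in {y | r₁ ≤ ‖y‖ ∧ ‖y‖ ≤ r₂}, y ∂ν = 0) :
    ∫ y in {y | a < ‖y‖ ∧ ‖y‖ ≤ b}, y ∂ν = 0 := by
  rcases le_or_gt b a with hba | hab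
  · have hempty : {y : E | a < ‖y‖ ∧ ‖y‖ ≤ b} = ∅ :=
      eq_empty_of_forall_notMem fun _ hy => (hy.1.trans_le hy.2).not_ge hba
    simp [hempty]
  set s : ℕ → Set E := fun n => {y | a + 1 / (n + 1) ≤ ‖y‖ ∧ ‖y‖ ≤ b}
  have hs_mono : Monotone s := fun m n hmn y hy =>
    ⟨le_trans (by gcongr) hy.1, hy.2⟩
  have hs_union : (⋃ n, s n) = {y | a < ‖y‖ ∧ ‖y‖ ≤ b} := by
    ext y
    simp only [s, mem_iUnion]
    constructor
    · rintro ⟨n, h₁, h₂⟩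
      exact ⟨lt_of_lt_of_le (lt_add_of_pos_right a (by positivity)) h₁, h₂⟩
    · rintro ⟨h₁, h₂⟩
      obtain ⟨n, hn⟩ := exists_nat_one_div_lt (sub_pos.2 h₁)
      exact ⟨n, by linarith, h₂⟩
  have hlim := tendsto_setIntegral_of_monotone (s := s) (fun n =>
    (measurableSet_le measurable_const measurable_norm).inter
      (measurableSet_le measurable_norm measurable_const)) hs_mono
    (hs_union ▸ integrableOn_id_annulus hfin b)
  have hzero : ∀ᶠ n in Filter.atTop, ∫ y in s n, y ∂ν = 0 := by
    filter_upwards [tendsto_one_div_add_atTop_nhds_zero_nat.eventually_lt_const (sub_pos.2 hab)]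
      with n hn
    exact hcancel _ b (by positivity) (by linarith)
  rw [hs_union] at hlim
  exact tendsto_nhds_unique hlim (tendsto_const_nhds.congr' (hzero.mono fun n hn => hn.symm))

end NormedSpace

section InnerProductSpace

variable {E : Type*} [NormedAddCommGroup E] [InnerProductSpace ℝ E]

theorem abs_sin_inner_sub_inner_le {ξ y : E} {r : ℝ} (hy : ‖y‖ ≤ r) :
    |Real.sin ⟪ξ, y⟫_ℝ - ⟪ξ, y⟫_ℝ| ≤ ‖ξ‖ ^ 3 * r / 6 * ‖y‖ ^ 2 := by
  have hinner : |⟪ξ, y⟫_ℝ| ≤ ‖ξ‖ * ‖y‖ := abs_real_inner_le_norm ξ y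
  calc |Real.sin ⟪ξ, y⟫_ℝ - ⟪ξ, y⟫_ℝ| = |⟪ξ, y⟫_ℝ - Real.sin ⟪ξ, y⟫_ℝ| := abs_sub_comm _ _
    _ ≤ |⟪ξ, y⟫_ℝ| ^ 3 / 6 := Real.abs_sub_sin_le _
    _ ≤ (‖ξ‖ * ‖y‖) ^ 3 / 6 := by gcongr
    _ = ‖ξ‖ ^ 3 * ‖y‖ ^ 2 * ‖y‖ / 6 := by ring
    _ ≤ ‖ξ‖ ^ 3 * ‖y‖ ^ 2 * r / 6 := by gcongr
    _ = ‖ξ‖ ^ 3 * r / 6 * ‖y‖ ^ 2 := by ring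

variable [MeasurableSpace E]

/-- `Im m(ξ)` for the Lévy symbol with compensator `ξ·y 1_{|y| ≤ r}`. -/
def imLevySymbol (ν : Measure E) (r : ℝ) (ξ : E) : ℝ :=
  ∫ y, (Real.sin ⟪ξ, y⟫_ℝ - if ‖y‖ ≤ r then ⟪ξ, y⟫_ℝ else 0) ∂ν

variable [OpensMeasurableSpace E] {ν : Measure E} {Λ : ℝ}

theorem integrable_sin_inner_sub_truncation (hΛ : 0 ≤ Λ)
    (hν : ∀ r, 0 < r → ν {y | r < ‖y‖} ≤ ENNReal.ofReal (Λ / r)) (ξ : E) {r : ℝ} (hr : 0 < r) :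
    Integrable (fun y => Real.sin ⟪ξ, y⟫_ℝ - if ‖y‖ ≤ r then ⟪ξ, y⟫_ℝ else 0) ν := by
  set B := {y : E | ‖y‖ ≤ r}
  have hB : MeasurableSet B := measurableSet_le measurable_norm measurable_const
  have hinner : Measurable fun y : E => ⟪ξ, y⟫_ℝ :=
    (continuous_const.inner continuous_id).measurable
  have hmeas : AEStronglyMeasurable
      (fun y => Real.sin ⟪ξ, y⟫_ℝ - if ‖y‖ ≤ r then ⟪ξ, y⟫_ℝ else 0) ν :=
    ((Real.measurable_sin.comp hinner).sub (hinner.ite hB measurable_const)).aestronglyMeasurable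
  rw [← integrableOn_univ, ← union_compl_self B]
  refine IntegrableOn.union ?_ ?_
  · refine ((integrableOn_norm_sq_of_tail_le hΛ hν r).const_mul (‖ξ‖ ^ 3 * r / 6)).mono'
      hmeas.restrict ((ae_restrict_iff' hB).2 (Filter.Eventually.of_forall fun y hy => ?_))
    rw [if_pos (show ‖y‖ ≤ r from hy), Real.norm_eq_abs]
    exact abs_sin_inner_sub_inner_le hy
  · refine Measure.integrableOn_of_bounded (M := 1) ?_ hmeas
      ((ae_restrict_iff' hB.compl).2 (Filter.Eventually.of_forall fun y hy => ?_))
    · have hBc : ν Bᶜ ≤ ENNReal.ofReal (Λ / r) :=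
        (measure_mono fun y (hy : y ∈ Bᶜ) => (not_le.1 hy : r < ‖y‖)).trans (hν r hr)
      exact ne_top_of_le_ne_top ENNReal.ofReal_ne_top hBc
    · rw [if_neg (show ¬‖y‖ ≤ r from hy), sub_zero, Real.norm_eq_abs]
      exact Real.abs_sin_le_one _

theorem imLevySymbol_eq_of_cancel [CompleteSpace E] [SecondCountableTopology E] (hΛ : 0 ≤ Λ)
    (hν : ∀ r, 0 < r → ν {y | r < ‖y‖} ≤ ENNReal.ofReal (Λ / r))
    (hcancel : ∀ r₁ r₂ : ℝ, 0 < r₁ → r₁ < r₂ → ∫ y in {y | r₁ ≤ ‖y‖ ∧ ‖y‖ ≤ r₂}, y ∂ν = 0)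
    (ξ : E) {r s : ℝ} (hr : 0 < r) (hs : 0 < s) : imLevySymbol ν r ξ = imLevySymbol ν s ξ := by
  wlog hrs : r ≤ s generalizing r s
  · exact (this hs hr (le_of_not_ge hrs)).symm
  set A := {y : E | r < ‖y‖ ∧ ‖y‖ ≤ s}
  have hA : MeasurableSet A := (measurableSet_lt measurable_const measurable_norm).inter
    (measurableSet_le measurable_norm measurable_const)
  have hdiff : (fun y => (Real.sin ⟪ξ, y⟫_ℝ - if ‖y‖ ≤ r then ⟪ξ, y⟫_ℝ else 0) -
      (Real.sin ⟪ξ, y⟫_ℝ - if ‖y‖ ≤ s then ⟪ξ, y⟫_ℝ else 0)) = A.indicator (fun y => ⟪ξ, y⟫_ℝ) := by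
    ext y
    by_cases hyr : ‖y‖ ≤ r
    · simp [A, hyr, hyr.trans hrs, not_lt.2 hyr]
    · by_cases hys : ‖y‖ ≤ s <;> simp [A, hyr, hys, not_le.1 hyr]
  have hfin : ν {y | r < ‖y‖} ≠ ∞ := ne_top_of_le_ne_top ENNReal.ofReal_ne_top (hν r hr)
  rw [← sub_eq_zero, imLevySymbol, imLevySymbol,
    ← integral_sub (integrable_sin_inner_sub_truncation hΛ hν ξ hr)
      (integrable_sin_inner_sub_truncation hΛ hν ξ hs), hdiff, integral_indicator hA,
    integral_inner (integrableOn_id_annulus hfin s) ξ, setIntegral_annulus_eq_zero hr hfin hcancel,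
    inner_zero_right]

theorem abs_imLevySymbol_inv_norm_le (hΛ : 0 ≤ Λ)
    (hν : ∀ r, 0 < r → ν {y | r < ‖y‖} ≤ ENNReal.ofReal (Λ / r)) {ξ : E} (hξ : ξ ≠ 0) :
    |imLevySymbol ν ‖ξ‖⁻¹ ξ| ≤ 4 / 3 * Λ * ‖ξ‖ := by
  have hξ' : 0 < ‖ξ‖ := norm_pos_iff.2 hξ
  set R := ‖ξ‖⁻¹
  have hR : 0 < R := inv_pos.2 hξ'
  set g := fun y : E => Real.sin ⟪ξ, y⟫_ℝ - if ‖y‖ ≤ R then ⟪ξ, y⟫_ℝ else 0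
  set B := {y : E | ‖y‖ ≤ R}
  have hB : MeasurableSet B := measurableSet_le measurable_norm measurable_const
  have hsmall : ‖∫ y in B, g y ∂ν‖ ≤ Λ / 3 * ‖ξ‖ := calc
    ‖∫ y in B, g y ∂ν‖ ≤ ∫ y in B, ‖ξ‖ ^ 3 * R / 6 * ‖y‖ ^ 2 ∂ν := by
      refine norm_integral_le_of_norm_le ((integrableOn_norm_sq_of_tail_le hΛ hν R).const_mul _)
        ((ae_restrict_iff' hB).2 (Filter.Eventually.of_forall fun y (hy : ‖y‖ ≤ R) => ?_))
      simp only [g, Real.norm_eq_abs, if_pos hy]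
      exact abs_sin_inner_sub_inner_le hy
    _ = ‖ξ‖ ^ 3 * R / 6 * ∫ y in B, ‖y‖ ^ 2 ∂ν := integral_const_mul _ _
    _ ≤ ‖ξ‖ ^ 3 * R / 6 * (2 * Λ * R) := by
      gcongr
      exact setIntegral_norm_sq_le_of_tail_le hΛ hν hR.le
    _ = Λ / 3 * ‖ξ‖ := by
      simp only [R]
      field_simp
      ring
  have hBc : ν Bᶜ ≤ ENNReal.ofReal (Λ * ‖ξ‖) := by
    refine (measure_mono fun y (hy : y ∈ Bᶜ) => (not_le.1 hy : R < ‖y‖)).trans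
      ((hν R hR).trans_eq ?_)
    simp only [R, div_inv_eq_mul]
  have hlarge : ‖∫ y in Bᶜ, g y ∂ν‖ ≤ Λ * ‖ξ‖ := calc
    ‖∫ y in Bᶜ, g y ∂ν‖ ≤ 1 * ν.real Bᶜ := by
      refine norm_setIntegral_le_of_norm_le_const (hBc.trans_lt ENNReal.ofReal_lt_top)
        fun y (hy : ¬‖y‖ ≤ R) => ?_
      simp only [g, Real.norm_eq_abs, if_neg hy, sub_zero]
      exact Real.abs_sin_le_one _
    _ ≤ Λ * ‖ξ‖ := by
      rw [one_mul]
      exact ENNReal.toReal_le_of_le_ofReal (by positivity) hBc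
  rw [← Real.norm_eq_abs, imLevySymbol,
    ← integral_add_compl hB (integrable_sin_inner_sub_truncation hΛ hν ξ hR)]
  calc _ ≤ ‖∫ y in B, g y ∂ν‖ + ‖∫ y in Bᶜ, g y ∂ν‖ := norm_add_le _ _
    _ ≤ 4 / 3 * Λ * ‖ξ‖ := by linarith

theorem abs_imLevySymbol_le [CompleteSpace E] [SecondCountableTopology E] (hΛ : 0 ≤ Λ)
    (hν : ∀ r, 0 < r → ν {y | r < ‖y‖} ≤ ENNReal.ofReal (Λ / r))
    (hcancel : ∀ r₁ r₂ : ℝ, 0 < r₁ → r₁ < r₂ → ∫ y in {y | r₁ ≤ ‖y‖ ∧ ‖y‖ ≤ r₂}, y ∂ν = 0)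
    (ξ : E) {r : ℝ} (hr : 0 < r) : |imLevySymbol ν r ξ| ≤ 4 / 3 * Λ * ‖ξ‖ := by
  rcases eq_or_ne ξ 0 with rfl | hξ
  · simp [imLevySymbol]
  rw [imLevySymbol_eq_of_cancel hΛ hν hcancel ξ hr (inv_pos.2 (norm_pos_iff.2 hξ))]
  exact abs_imLevySymbol_inv_norm_le hΛ hν hξ

end InnerProductSpace

theorem stmt_19_general (d : ℕ) (Λ : ℝ) (hΛ : 1 ≤ Λ)
    (ν : Measure (EuclideanSpace ℝ (Fin d)))
    (hν : ∀ r : ℝ, 0 < r → ν {y | r < ‖y‖} ≤ ENNReal.ofReal (Λ / r))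
    (hcancel : ∀ r₁ r₂ : ℝ, 0 < r₁ → r₁ < r₂ →
      (∫ y in {y : EuclideanSpace ℝ (Fin d) | r₁ ≤ ‖y‖ ∧ ‖y‖ ≤ r₂}, y ∂ν) = 0) :
    ∃ N : ℝ, 0 < N ∧ ∀ ξ : EuclideanSpace ℝ (Fin d),
      |∫ y, (Real.sin ⟪ξ, y⟫_ℝ - (if ‖y‖ ≤ 1 then ⟪ξ, y⟫_ℝ else 0)) ∂ν| ≤ N * ‖ξ‖ :=
  ⟨4 / 3 * Λ, by positivity, fun ξ => abs_imLevySymbol_le (by positivity) hν hcancel ξ one_pos⟩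

/-- For a Lévy measure of order `σ = 1` with tail bound `ν(B_r^c) ≤ Λ/r` and the
cancellation condition, the imaginary part of the symbol satisfies
`|∫ (sin(ξ·y) − ξ·y 1_{|y|≤1}) ν(dy)| ≤ N(Λ) |ξ|`. -/
theorem stmt_19 (d : ℕ) (Λ : ℝ) (hΛ : 1 ≤ Λ)
    (ν : Measure (EuclideanSpace ℝ (Fin d)))
    (h0 : ν {0} = 0)
    (hlevy : ∫⁻ y, ENNReal.ofReal (min 1 (‖y‖ ^ 2)) ∂ν < ⊤)
    (hν : ∀ r : ℝ, 0 < r → ν {y | r < ‖y‖} ≤ ENNReal.ofReal (Λ / r))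
    (hcancel : ∀ r₁ r₂ : ℝ, 0 < r₁ → r₁ < r₂ →
      (∫ y in {y : EuclideanSpace ℝ (Fin d) | r₁ ≤ ‖y‖ ∧ ‖y‖ ≤ r₂}, y ∂ν) = 0) :
    ∃ N : ℝ, 0 < N ∧ ∀ ξ : EuclideanSpace ℝ (Fin d),
      |∫ y, (Real.sin ⟪ξ, y⟫_ℝ - (if ‖y‖ ≤ 1 then ⟪ξ, y⟫_ℝ else 0)) ∂ν| ≤ N * ‖ξ‖ :=
  stmt_19_general d Λ hΛ ν hν hcancel
end
end
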